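/- The function ψ(u) = (1 + u²) e^{u²/2} is exponentially convex on ℝ: for all n, all real points t₁,…,tₙ and complex coefficients a₁,…,aₙ, Σᵢⱼ aᵢ āⱼ ψ(tᵢ + tⱼ) ≥ 0. -/

import Mathlib

/-!
The function ψ is the second derivative of the moment generating function `u ↦ exp (u ^ 2 / 2)`
of the standard Gaussian `γ`, so `ψ (s + t) = ∫ (x * exp (s * x)) * (x * exp (t * x)) dγ(x)`.
The quadratic form `∑ aᵢ conj aⱼ ψ (tᵢ + tⱼ)` is then the Gram form of the functions
`x ↦ x * exp (tᵢ * x)` in `L²(γ)`, i.e. `∫ |∑ aᵢ x exp (tᵢ x)|² dγ(x) ≥ 0`.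
-/

open MeasureTheory ProbabilityTheory Real ComplexConjugate
open scoped ComplexOrder

theorem sum_sum_mul_conj_mul_integral_mul_nonneg {α ι : Type*} [MeasurableSpace α] [Fintype ι]
    (μ : Measure α) (φ : ι → α → ℝ) (hφ : ∀ i j, Integrable (fun x ↦ φ i x * φ j x) μ)
    (a : ι → ℂ) :
    0 ≤ ∑ i, ∑ j, a i * conj (a j) * ((∫ x, φ i x * φ j x ∂μ : ℝ) : ℂ) := by
  have h_pointwise (x : α) : ∑ i, ∑ j, a i * conj (a j) * ((φ i x * φ j x : ℝ) : ℂ) =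
      (Complex.normSq (∑ i, a i * φ i x) : ℂ) := by
    rw [← Complex.mul_conj, map_sum, Finset.sum_mul_sum]
    push_cast
    simp only [map_mul, Complex.conj_ofReal]
    exact Finset.sum_congr rfl fun i _ ↦ Finset.sum_congr rfl fun j _ ↦ by ring
  have h_int (i j : ι) : Integrable (fun x ↦ a i * conj (a j) * ((φ i x * φ j x : ℝ) : ℂ)) μ :=
    ((hφ i j).ofReal).const_mul _
  calc (0 : ℂ) ≤ ((∫ x, Complex.normSq (∑ i, a i * φ i x) ∂μ : ℝ) : ℂ) :=
        Complex.zero_le_real.mpr (integral_nonneg fun x ↦ Complex.normSq_nonneg _)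
    _ = ∫ x, ∑ i, ∑ j, a i * conj (a j) * ((φ i x * φ j x : ℝ) : ℂ) ∂μ := by
        simp only [h_pointwise, integral_complex_ofReal]
    _ = ∑ i, ∑ j, a i * conj (a j) * ((∫ x, φ i x * φ j x ∂μ : ℝ) : ℂ) := by
        rw [integral_finsetSum _ fun i _ ↦ integrable_finsetSum _ fun j _ ↦ h_int i j]
        refine Finset.sum_congr rfl fun i _ ↦ ?_
        rw [integral_finsetSum _ fun j _ ↦ h_int i j]
        simp only [integral_const_mul, integral_complex_ofReal]

theorem hasDerivAt_exp_sq_div_two (u : ℝ) :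
    HasDerivAt (fun u ↦ exp (u ^ 2 / 2)) (u * exp (u ^ 2 / 2)) u := by
  convert ((hasDerivAt_pow 2 u).div_const 2).exp using 1
  ring

theorem iteratedDeriv_two_exp_sq_div_two (u : ℝ) :
    iteratedDeriv 2 (fun u ↦ exp (u ^ 2 / 2)) u = (1 + u ^ 2) * exp (u ^ 2 / 2) := by
  have h_deriv : deriv (fun u ↦ exp (u ^ 2 / 2)) = fun u ↦ u * exp (u ^ 2 / 2) :=
    funext fun u ↦ (hasDerivAt_exp_sq_div_two u).deriv
  rw [iteratedDeriv_succ, iteratedDeriv_one, h_deriv,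
    ((hasDerivAt_id' u).fun_mul (hasDerivAt_exp_sq_div_two u)).deriv]
  ring

theorem integral_sq_mul_exp_mul_gaussianReal (u : ℝ) :
    ∫ x, x ^ 2 * exp (u * x) ∂gaussianReal 0 1 = (1 + u ^ 2) * exp (u ^ 2 / 2) := by
  have h := iteratedDeriv_mgf (X := id) (μ := gaussianReal 0 1) (t := u) (by simp) 2
  simp only [mgf_id_gaussianReal, id_eq, zero_mul, zero_add, NNReal.coe_one, one_mul] at h
  rw [← h, iteratedDeriv_two_exp_sq_div_two]

theorem integrable_sq_mul_exp_mul_gaussianReal (u : ℝ) :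
    Integrable (fun x ↦ x ^ 2 * exp (u * x)) (gaussianReal 0 1) :=
  integrable_pow_mul_exp_of_mem_interior_integrableExpSet (X := id) (by simp) 2

theorem expConvex_one_add_sq_mul_exp_half_sq
    (n : ℕ) (t : Fin n → ℝ) (a : Fin n → ℂ) :
    0 ≤ (∑ i, ∑ j, a i * (starRingEnd ℂ) (a j) *
          (((1 + (t i + t j) ^ 2) * Real.exp ((t i + t j) ^ 2 / 2) : ℝ) : ℂ)).re ∧
      (∑ i, ∑ j, a i * (starRingEnd ℂ) (a j) *
          (((1 + (t i + t j) ^ 2) * Real.exp ((t i + t j) ^ 2 / 2) : ℝ) : ℂ)).im = 0 := by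
  have h_mul (i j : Fin n) (x : ℝ) :
      x * exp (t i * x) * (x * exp (t j * x)) = x ^ 2 * exp ((t i + t j) * x) := by
    rw [add_mul, exp_add]; ring
  have h_gram := sum_sum_mul_conj_mul_integral_mul_nonneg (gaussianReal 0 1)
    (fun i x ↦ x * exp (t i * x))
    (fun i j ↦ by simpa only [h_mul] using integrable_sq_mul_exp_mul_gaussianReal (t i + t j)) a
  simp only [h_mul, integral_sq_mul_exp_mul_gaussianReal] at h_gram
  exact (Complex.nonneg_iff.mp h_gram).imp_right Eq.symm
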